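/- Let 𝒱 ⊂ ℝⁿ be an open bounded convex set, let f : closure(𝒱) → ℝⁿ be of class C², let η : closure(𝒱) → ℝ be of class C² with positive-definite Hessian at every point of closure(𝒱), and let q : closure(𝒱) → ℝ be of class C² with ∇q(u) = Df(u)ᵀ·∇η(u) for all u ∈ 𝒱. Let W be a compact subset of 𝒱. Then there exists a finite speed of information s > 0 such that |q(a;b)| ≤ s·η(a|b) for all a ∈ 𝒱 and b ∈ W, where η(a|b) := η(a) − η(b) − ∇η(b)·(a − b) and q(a;b) := q(a) − q(b) − ∇η(b)·(f(a) − f(b)). -/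

import Mathlib

/-!
Along the segment from `b` to `a` both quantities are second-order Taylor remainders. Uniform
positivity of the Hessian of `η` on the compact set `closure 𝒱` gives `η(a|b) ≥ c ‖a - b‖²`.
The compatibility `∇q = Dfᵀ ∇η` at `b` cancels the first-order part of `q(a;b)`, which is then
the remainder of `q` minus `∇η(b)` paired with the remainder of `f`, hence
`|q(a;b)| ≤ C ‖a - b‖²` with `C` built from bounds on `D²q`, `D²f` on `𝒱` and `∇η` on `W`.
Hence `s = |C| / c + 1` is a speed of information.
-/

open MeasureTheory Filter
open scoped RealInnerProductSpace

noncomputable section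

/-- Relative entropy `η(a|b) = η(a) - η(b) - ∇η(b)·(a-b)`. -/
def relEnt {n : ℕ} (η : EuclideanSpace ℝ (Fin n) → ℝ) (a b : EuclideanSpace ℝ (Fin n)) : ℝ :=
  η a - η b - ⟪gradient η b, a - b⟫

/-- Relative entropy flux `q(a;b) = q(a) - q(b) - ∇η(b)·(f(a)-f(b))`. -/
def relFlux {n : ℕ} (f : EuclideanSpace ℝ (Fin n) → EuclideanSpace ℝ (Fin n))
    (η q : EuclideanSpace ℝ (Fin n) → ℝ) (a b : EuclideanSpace ℝ (Fin n)) : ℝ :=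
  q a - q b - ⟪gradient η b, f a - f b⟫

open Set

section Calculus

variable {E F : Type*} [NormedAddCommGroup E] [NormedSpace ℝ E]
  [NormedAddCommGroup F] [NormedSpace ℝ F]

theorem ContDiffAt.differentiableAt_fderiv {g : E → F} {x : E} (h : ContDiffAt ℝ 2 g x) :
    DifferentiableAt ℝ (fderiv ℝ g) x :=
  (h.fderiv_right (m := 1) le_rfl).differentiableAt one_ne_zero

theorem HasFDerivAt.hasDerivAt_add_smul {g : E → F} {g' : E →L[ℝ] F} {x v : E} {t : ℝ}
    (h : HasFDerivAt g g' (x + t • v)) : HasDerivAt (fun s : ℝ => g (x + s • v)) (g' v) t :=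
  h.comp_hasDerivAt t (((hasDerivAt_id t).smul_const v).const_add x |>.congr_deriv (one_smul ℝ v))

theorem HasFDerivAt.hasDerivAt_fderiv_add_smul {g : E → F} {g'' : E →L[ℝ] E →L[ℝ] F}
    {x v : E} {t : ℝ} (h : HasFDerivAt (fderiv ℝ g) g'' (x + t • v)) :
    HasDerivAt (fun s : ℝ => fderiv ℝ g (x + s • v) v) (g'' v v) t :=
  ((ContinuousLinearMap.apply ℝ F v).hasFDerivAt.comp _ h).hasDerivAt_add_smul

/-- Apply the mean value inequality twice: first to `fderiv g`, then to
`y ↦ g y - fderiv g b (y - b)` on the segment `[b, a]`. -/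
theorem Convex.norm_sub_sub_fderiv_le {s : Set E} (hs : Convex ℝ s) {g : E → F}
    (hg : ∀ x ∈ s, DifferentiableAt ℝ g x) (hg' : ∀ x ∈ s, DifferentiableAt ℝ (fderiv ℝ g) x)
    {M : ℝ} (hM : ∀ x ∈ s, ‖fderiv ℝ (fderiv ℝ g) x‖ ≤ M) {a b : E} (ha : a ∈ s) (hb : b ∈ s) :
    ‖g a - g b - fderiv ℝ g b (a - b)‖ ≤ M * ‖a - b‖ ^ 2 := by
  have hM0 : 0 ≤ M := (ContinuousLinearMap.opNorm_nonneg _).trans (hM b hb)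
  have hseg : segment ℝ b a ⊆ s := hs.segment_subset hb ha
  have hderiv : ∀ x ∈ segment ℝ b a, HasFDerivWithinAt (fun y => g y - fderiv ℝ g b (y - b))
      (fderiv ℝ g x - fderiv ℝ g b) (segment ℝ b a) x := fun x hx => by
    have hlin : HasFDerivAt (fun y => fderiv ℝ g b (y - b)) (fderiv ℝ g b) x :=
      (fderiv ℝ g b).hasFDerivAt.comp x ((hasFDerivAt_id x).sub_const b)
    exact ((hg x (hseg hx)).hasFDerivAt.sub hlin).hasFDerivWithinAt
  have hbound : ∀ x ∈ segment ℝ b a, ‖fderiv ℝ g x - fderiv ℝ g b‖ ≤ M * ‖a - b‖ := fun x hx =>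
    (hs.norm_image_sub_le_of_norm_fderiv_le hg' hM hb (hseg hx)).trans
      (by gcongr; exact norm_sub_le_of_mem_segment hx)
  have := (convex_segment b a).norm_image_sub_le_of_norm_hasFDerivWithin_le hderiv hbound
    (left_mem_segment ℝ b a) (right_mem_segment ℝ b a)
  rw [sub_self, map_zero, sub_zero] at this
  rwa [pow_two, ← mul_assoc, sub_right_comm]

theorem le_sub_sub_deriv_mul_of_le_deriv_deriv {φ φ' φ'' : ℝ → ℝ} {x y k : ℝ} (hxy : x ≤ y)
    (hφ : ∀ t ∈ Icc x y, HasDerivAt φ (φ' t) t) (hφ' : ∀ t ∈ Icc x y, HasDerivAt φ' (φ'' t) t)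
    (hk : ∀ t ∈ Icc x y, k ≤ φ'' t) :
    k / 2 * (y - x) ^ 2 ≤ φ y - φ x - φ' x * (y - x) := by
  have hslope : ∀ t ∈ Icc x y, k * (t - x) ≤ φ' t - φ' x := by
    intro t ht
    refine (convex_Icc x y).mul_sub_le_image_sub_of_le_deriv
      (fun t ht => (hφ' t ht).continuousAt.continuousWithinAt)
      (fun t ht => (hφ' t (interior_subset ht)).differentiableAt.differentiableWithinAt)
      (fun t ht => ?_) x (left_mem_Icc.2 hxy) t ht ht.1
    rw [(hφ' t (interior_subset ht)).deriv]
    exact hk t (interior_subset ht)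
  have hmono : MonotoneOn (fun t => φ t - φ' x * (t - x) - k / 2 * (t - x) ^ 2) (Icc x y) := by
    have hderiv : ∀ t ∈ Icc x y, HasDerivAt (fun t => φ t - φ' x * (t - x) - k / 2 * (t - x) ^ 2)
        (φ' t - φ' x - k * (t - x)) t := fun t ht => by
      have := ((hφ t ht).sub (((hasDerivAt_id t).sub_const x).const_mul (φ' x))).sub
        ((((hasDerivAt_id t).sub_const x).pow 2).const_mul (k / 2))
      exact this.congr_deriv (by simp; ring)
    refine monotoneOn_of_hasDerivWithinAt_nonneg (convex_Icc x y)
      (fun t ht => (hderiv t ht).continuousAt.continuousWithinAt)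
      (fun t ht => (hderiv t (interior_subset ht)).hasDerivWithinAt) (fun t ht => ?_)
    linarith [hslope t (interior_subset ht)]
  have := hmono (left_mem_Icc.2 hxy) (right_mem_Icc.2 hxy) hxy
  simp only [sub_self] at this
  linarith

theorem Convex.le_sub_sub_fderiv_of_le_fderiv_fderiv {s : Set E} (hs : Convex ℝ s) {g : E → ℝ}
    (hg : ∀ x ∈ s, DifferentiableAt ℝ g x) (hg' : ∀ x ∈ s, DifferentiableAt ℝ (fderiv ℝ g) x)
    {a b : E} (ha : a ∈ s) (hb : b ∈ s) {k : ℝ}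
    (hk : ∀ x ∈ s, k ≤ fderiv ℝ (fderiv ℝ g) x (a - b) (a - b)) :
    k / 2 ≤ g a - g b - fderiv ℝ g b (a - b) := by
  have hmem : ∀ t ∈ Icc (0 : ℝ) 1, b + t • (a - b) ∈ s := fun t ht => hs.add_smul_sub_mem hb ha ht
  have := le_sub_sub_deriv_mul_of_le_deriv_deriv zero_le_one
    (fun t ht => (hg _ (hmem t ht)).hasFDerivAt.hasDerivAt_add_smul)
    (fun t ht => (hg' _ (hmem t ht)).hasFDerivAt.hasDerivAt_fderiv_add_smul)
    (fun t ht => hk _ (hmem t ht))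
  simpa using this

theorem IsCompact.exists_bound_norm_fderiv_fderiv {K : Set E} (hK : IsCompact K)
    (hKu : UniqueDiffOn ℝ K) {g : E → F} (hg : ContDiffOn ℝ 2 g K) :
    ∃ M, ∀ x ∈ interior K, ‖fderiv ℝ (fderiv ℝ g) x‖ ≤ M := by
  obtain ⟨M, hM⟩ := hK.exists_bound_of_continuousOn
    (hg.continuousOn_iteratedFDerivWithin (m := 2) le_rfl hKu)
  refine ⟨M, fun x hx => ?_⟩
  rw [← norm_iteratedFDeriv_one, norm_iteratedFDeriv_fderiv, ← iteratedFDerivWithin_eq_iteratedFDeriv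
    hKu (hg.contDiffAt (mem_interior_iff_mem_nhds.1 hx)) (interior_subset hx)]
  exact hM x (interior_subset hx)

theorem ContinuousMultilinearMap.apply_smul_smul_two (B : E [×2]→L[ℝ] F) (t : ℝ) (v : E) :
    B ![t • v, t • v] = t ^ 2 • B ![v, v] := by
  have := B.map_smul_univ (fun _ => t) ![v, v]
  simp only [Finset.prod_const, Finset.card_univ, Fintype.card_fin] at this
  rw [← this]
  congr 1
  ext i
  fin_cases i <;> rfl

/-- Minimise `B x ![v, v]` over `K ×ˢ sphere 0 1`, then scale. -/
theorem IsCompact.exists_pos_mul_norm_sq_le [ProperSpace E] {X : Type*} [TopologicalSpace X]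
    {K : Set X} (hK : IsCompact K) {B : X → E [×2]→L[ℝ] ℝ} (hB : ContinuousOn B K)
    (hpos : ∀ x ∈ K, ∀ v : E, v ≠ 0 → 0 < B x ![v, v]) :
    ∃ c > 0, ∀ x ∈ K, ∀ v, c * ‖v‖ ^ 2 ≤ B x ![v, v] := by
  have hcont : ContinuousOn (fun p : X × E => B p.1 ![p.2, p.2]) (K ×ˢ Metric.sphere 0 1) := by
    have hdiag : Continuous fun p : X × E => (![p.2, p.2] : Fin 2 → E) :=
      continuous_pi fun i => by fin_cases i <;> exact continuous_snd
    exact continuous_eval.comp_continuousOn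
      ((hB.comp continuousOn_fst fun p hp => hp.1).prodMk hdiag.continuousOn)
  obtain ⟨c, hc, hcle⟩ := (hK.prod (isCompact_sphere 0 1)).exists_forall_le' hcont
    (fun p hp => hpos _ hp.1 _ (ne_zero_of_mem_unit_sphere ⟨p.2, hp.2⟩))
  refine ⟨c, hc, fun x hx v => ?_⟩
  rcases eq_or_ne v 0 with rfl | hv
  · simp [(B x).map_coord_zero (m := ![0, 0]) 0 rfl]
  have hu : ‖v‖⁻¹ • v ∈ Metric.sphere (0 : E) 1 := by simp [norm_smul, hv]
  have := (B x).apply_smul_smul_two ‖v‖ (‖v‖⁻¹ • v)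
  rw [smul_inv_smul₀ (norm_ne_zero_iff.2 hv)] at this
  rw [this, smul_eq_mul, mul_comm]
  gcongr
  exact hcle (x, _) ⟨hx, hu⟩

end Calculus

theorem norm_gradient_eq_norm_fderiv {E : Type*} [NormedAddCommGroup E] [InnerProductSpace ℝ E]
    [CompleteSpace E] (g : E → ℝ) (x : E) : ‖gradient g x‖ = ‖fderiv ℝ g x‖ := by
  rw [← toDual_gradient, LinearIsometryEquiv.norm_map]

section RelativeEntropy

variable {n : ℕ} {K U : Set (EuclideanSpace ℝ (Fin n))}

theorem exists_pos_mul_norm_sq_le_relEnt (hK : IsCompact K) (hKu : UniqueDiffOn ℝ K)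
    (hUc : Convex ℝ U) (hUK : U ⊆ interior K) {η : EuclideanSpace ℝ (Fin n) → ℝ}
    (hη : ContDiffOn ℝ 2 η K)
    (hHess : ∀ x ∈ K, ∀ h : EuclideanSpace ℝ (Fin n), h ≠ 0 →
      0 < iteratedFDerivWithin ℝ 2 η K x ![h, h]) :
    ∃ c > 0, ∀ a ∈ U, ∀ b ∈ U, c * ‖a - b‖ ^ 2 ≤ relEnt η a b := by
  obtain ⟨c, hc, hcoer⟩ :=
    hK.exists_pos_mul_norm_sq_le (hη.continuousOn_iteratedFDerivWithin (m := 2) le_rfl hKu) hHess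
  have hsmooth : ∀ x ∈ U, ContDiffAt ℝ 2 η x := fun x hx =>
    hη.contDiffAt (mem_interior_iff_mem_nhds.1 (hUK hx))
  refine ⟨c / 2, by positivity, fun a ha b hb => ?_⟩
  have hHessU : ∀ x ∈ U, c * ‖a - b‖ ^ 2 ≤ fderiv ℝ (fderiv ℝ η) x (a - b) (a - b) := by
    intro x hx
    have := hcoer x (interior_subset (hUK hx)) (a - b)
    rwa [iteratedFDerivWithin_eq_iteratedFDeriv hKu (hsmooth x hx) (interior_subset (hUK hx)),
      iteratedFDeriv_two_apply] at this
  have := hUc.le_sub_sub_fderiv_of_le_fderiv_fderiv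
    (fun x hx => (hsmooth x hx).differentiableAt two_ne_zero)
    (fun x hx => (hsmooth x hx).differentiableAt_fderiv) ha hb hHessU
  rw [relEnt, inner_gradient_left]
  linarith

theorem exists_abs_relFlux_le (hK : IsCompact K) (hKu : UniqueDiffOn ℝ K) (hUc : Convex ℝ U)
    (hUK : U ⊆ interior K) {W : Set (EuclideanSpace ℝ (Fin n))} (hWc : IsCompact W)
    (hWU : W ⊆ U) {f : EuclideanSpace ℝ (Fin n) → EuclideanSpace ℝ (Fin n)}
    {η q : EuclideanSpace ℝ (Fin n) → ℝ} (hf : ContDiffOn ℝ 2 f K) (hq : ContDiffOn ℝ 2 q K)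
    (hη : ContinuousOn (fderiv ℝ η) W)
    (hpair : ∀ u ∈ W, ∀ h : EuclideanSpace ℝ (Fin n),
      fderiv ℝ q u h = ⟪gradient η u, fderiv ℝ f u h⟫) :
    ∃ C, ∀ a ∈ U, ∀ b ∈ W, |relFlux f η q a b| ≤ C * ‖a - b‖ ^ 2 := by
  obtain ⟨Mq, hMq⟩ := hK.exists_bound_norm_fderiv_fderiv hKu hq
  obtain ⟨Mf, hMf⟩ := hK.exists_bound_norm_fderiv_fderiv hKu hf
  obtain ⟨Mη, hMη⟩ := hWc.exists_bound_of_continuousOn hη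
  have hnhds : ∀ x ∈ U, K ∈ nhds x := fun x hx => mem_interior_iff_mem_nhds.1 (hUK hx)
  refine ⟨Mq + Mη * Mf, fun a ha b hb => ?_⟩
  have hRq := hUc.norm_sub_sub_fderiv_le
    (fun x hx => (hq.contDiffAt (hnhds x hx)).differentiableAt two_ne_zero)
    (fun x hx => (hq.contDiffAt (hnhds x hx)).differentiableAt_fderiv)
    (fun x hx => hMq x (hUK hx)) ha (hWU hb)
  have hRf := hUc.norm_sub_sub_fderiv_le
    (fun x hx => (hf.contDiffAt (hnhds x hx)).differentiableAt two_ne_zero)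
    (fun x hx => (hf.contDiffAt (hnhds x hx)).differentiableAt_fderiv)
    (fun x hx => hMf x (hUK hx)) ha (hWU hb)
  have hsplit : relFlux f η q a b = (q a - q b - fderiv ℝ q b (a - b)) -
      ⟪gradient η b, f a - f b - fderiv ℝ f b (a - b)⟫ := by
    simp only [relFlux, hpair b hb, inner_sub_right]
    ring
  rw [hsplit]
  calc _ ≤ |q a - q b - fderiv ℝ q b (a - b)| +
        |⟪gradient η b, f a - f b - fderiv ℝ f b (a - b)⟫| := abs_sub _ _
    _ ≤ Mq * ‖a - b‖ ^ 2 + ‖gradient η b‖ * ‖f a - f b - fderiv ℝ f b (a - b)‖ :=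
        add_le_add hRq (abs_real_inner_le_norm _ _)
    _ ≤ Mq * ‖a - b‖ ^ 2 + Mη * (Mf * ‖a - b‖ ^ 2) := by
        rw [norm_gradient_eq_norm_fderiv]
        gcongr
        · exact (norm_nonneg _).trans (hMη b hb)
        · exact hMη b hb
    _ = (Mq + Mη * Mf) * ‖a - b‖ ^ 2 := by ring

end RelativeEntropy

/-- Existence of a finite speed of information: `|q(a;b)| ≤ s·η(a|b)`
for all `a ∈ 𝒱` and `b` in a compact subset `W ⊆ 𝒱`. -/
theorem stmt9 (n : ℕ) (𝒱 : Set (EuclideanSpace ℝ (Fin n)))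
    (h𝒱o : IsOpen 𝒱) (h𝒱b : Bornology.IsBounded 𝒱) (h𝒱c : Convex ℝ 𝒱)
    (f : EuclideanSpace ℝ (Fin n) → EuclideanSpace ℝ (Fin n))
    (η q : EuclideanSpace ℝ (Fin n) → ℝ)
    (hf : ContDiffOn ℝ 2 f (closure 𝒱))
    (hη : ContDiffOn ℝ 2 η (closure 𝒱))
    (hHess : ∀ x ∈ closure 𝒱, ∀ h : EuclideanSpace ℝ (Fin n), h ≠ 0 →
      0 < iteratedFDerivWithin ℝ 2 η (closure 𝒱) x ![h, h])
    (hq : ContDiffOn ℝ 2 q (closure 𝒱))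
    (hpair : ∀ u ∈ 𝒱, ∀ h : EuclideanSpace ℝ (Fin n),
      fderiv ℝ q u h = ⟪gradient η u, fderiv ℝ f u h⟫)
    (W : Set (EuclideanSpace ℝ (Fin n))) (hWc : IsCompact W) (hW𝒱 : W ⊆ 𝒱) :
    ∃ s : ℝ, 0 < s ∧ ∀ a ∈ 𝒱, ∀ b ∈ W,
      |relFlux f η q a b| ≤ s * relEnt η a b := by
  rcases 𝒱.eq_empty_or_nonempty with rfl | ⟨x₀, hx₀⟩
  · exact ⟨1, one_pos, fun a ha => absurd ha (notMem_empty a)⟩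
  have h𝒱K : 𝒱 ⊆ interior (closure 𝒱) := h𝒱o.subset_interior_iff.2 subset_closure
  have hKc : IsCompact (closure 𝒱) := h𝒱b.isCompact_closure
  have hKu : UniqueDiffOn ℝ (closure 𝒱) := uniqueDiffOn_convex h𝒱c.closure ⟨x₀, h𝒱K hx₀⟩
  obtain ⟨c, hc, hEnt⟩ := exists_pos_mul_norm_sq_le_relEnt hKc hKu h𝒱c h𝒱K hη hHess
  have hgrad : ContinuousOn (fderiv ℝ η) W :=
    ((hη.mono subset_closure).continuousOn_fderiv_of_isOpen h𝒱o (by norm_num)).mono hW𝒱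
  obtain ⟨C, hFlux⟩ := exists_abs_relFlux_le hKc hKu h𝒱c h𝒱K hWc hW𝒱 hf hq hgrad
    fun u hu => hpair u (hW𝒱 hu)
  refine ⟨|C| / c + 1, by positivity, fun a ha b hb => ?_⟩
  have hE := hEnt a ha b (hW𝒱 hb)
  have hE0 : 0 ≤ relEnt η a b := le_trans (by positivity) hE
  calc |relFlux f η q a b| ≤ |C| / c * (c * ‖a - b‖ ^ 2) := by
        rw [← mul_assoc, div_mul_cancel₀ _ hc.ne']
        exact (hFlux a ha b hb).trans (by gcongr; exact le_abs_self C)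
    _ ≤ (|C| / c + 1) * relEnt η a b := by
        nlinarith [mul_le_mul_of_nonneg_left hE (by positivity : 0 ≤ |C| / c)]

end
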